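/- If G is a graph such that neither the 3-uniform hypergraph based on G nor the 3-uniform hypergraph based on its complement is metric, then the equivalence relation ≡_G on the two-point subsets of the vertex set of G is an obstacle. -/

import Mathlib

universe u

/-- A function `d` is a metric (distance function) on `α`. -/
structure IsMetric {α : Type*} (d : α → α → ℝ) : Prop where
  eq_iff : ∀ x y, d x y = 0 ↔ x = y
  symm : ∀ x y, d x y = d y x
  triangle : ∀ x y z, d x z ≤ d x y + d y z

/-- `[u v w]`: the points are pairwise distinct and `v` lies between `u` and `w`. -/
def MBtw {α : Type*} (d : α → α → ℝ) (u v w : α) : Prop :=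
  u ≠ v ∧ u ≠ w ∧ v ≠ w ∧ d u v + d v w = d u w

/-- The hyperedge set `E_M` associated with a metric space: all triples
`{x,y,z}` such that one of the three points is between the other two. -/
def metricEdges {α : Type*} (d : α → α → ℝ) : Set (Set α) :=
  {s | ∃ u v w : α, s = {u, v, w} ∧ MBtw d u v w}

/-- A 3-uniform hypergraph (given by its hyperedge set on vertex type `V`)
is metric if there is a metric space on ground set `V` with `E = E_M`. -/
def IsMetricHypergraph {V : Type*} (E : Set (Set V)) : Prop :=
  ∃ d : V → V → ℝ, IsMetric d ∧ E = metricEdges d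

/-- The hypergraph based on a graph `G`: the vertex set is `V ∪ {x}` (here
`Option V`, with `none` playing the role of the extra point `x`); the
hyperedges are all three-point subsets of `V` together with all sets
`{x,u,v}` with `{u,v}` an edge of `G`. -/
def basedOn {V : Type*} (G : SimpleGraph V) : Set (Set (Option V)) :=
  {s | (∃ u v w : V, u ≠ v ∧ u ≠ w ∧ v ≠ w ∧ s = {some u, some v, some w}) ∨
       (∃ u v : V, G.Adj u v ∧ s = {none, some u, some v})}

/-- The hyperedge set of the subhypergraph induced on `U`. -/
def inducedEdges {V : Type*} (E : Set (Set V)) (U : Set V) : Set (Set U) :=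
  {s | Subtype.val '' s ∈ E}

/-- The line `L_M(xy)` determined by two points of a metric space. -/
def lineOf {α : Type*} (d : α → α → ℝ) (x y : α) : Set α :=
  {x, y} ∪ {z | ({x, y, z} : Set α) ∈ metricEdges d}

/-- `e` is a two-point set forming an edge of `G`. -/
def IsEdgePair {V : Type*} (G : SimpleGraph V) (e : Set V) : Prop :=
  ∃ u v : V, G.Adj u v ∧ e = {u, v}

/-- The equivalence relation `≡_G`: two pairs are equivalent iff both are
edges of `G` or both are non-edges of `G`. -/
def graphEquiv {V : Type*} (G : SimpleGraph V) (e f : Set V) : Prop :=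
  (IsEdgePair G e ∧ IsEdgePair G f) ∨ (¬ IsEdgePair G e ∧ ¬ IsEdgePair G f)

/-- A relation `r` on two-point subsets of `V` is an obstacle if no metric
space on a superset `W` of `V` has `L_M(ab) = L_M(cd) ↔ {a,b} r {c,d}`
for all two-point subsets `{a,b}`, `{c,d}` of `V`. -/
def IsObstacle {V : Type u} (r : Set V → Set V → Prop) : Prop :=
  ¬ ∃ (W : Type u) (f : V ↪ W) (d : W → W → ℝ), IsMetric d ∧
      ∀ a b c e : V, a ≠ b → c ≠ e →
        (lineOf d (f a) (f b) = lineOf d (f c) (f e) ↔ r {a, b} {c, e})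

/-- The restriction of a relation on two-point subsets of `V` to the
two-point subsets of `U ⊆ V`. -/
def restrictRel {V : Type*} (r : Set V → Set V → Prop) (U : Set V) :
    Set U → Set U → Prop :=
  fun e f => r (Subtype.val '' e) (Subtype.val '' f)

/-!
Suppose a metric space `W ⊇ V` realises `≡_G`. Then all edges of `G` span one line `L_E` and all
non-edges one line `L_N`. For any three points `a, b, c` of `V`, some pair through `c` lies in the
class of `ab`, or `ca` and `cb` lie in one class; either way `a, b, c` are collinear.

If `G` has an edge and a non-edge, then `L_E ≠ L_N`, and a point `z` in exactly one of them lies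
outside `V` (every line of a pair of `V` contains `V`). The metric restricted to `V ∪ {z}` realises
the hypergraph based on `G` (if `z ∈ L_E`) or on its complement (if `z ∈ L_N`). If `G` is edgeless or
complete, add to `V` a point at distance `√(d(w₀, v)² + 1)` from each `v`: it lies in no collinear
triple, so it realises the hypergraph based on `G` or on `Gᶜ` respectively.
-/

open Function

section MetricEdges

variable {α β : Type*} {d : α → α → ℝ}

theorem IsMetric.comap {d : β → β → ℝ} (hm : IsMetric d) {φ : α → β} (hφ : Injective φ) :
    IsMetric (fun x y => d (φ x) (φ y)) where
  eq_iff _ _ := (hm.eq_iff _ _).trans hφ.eq_iff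
  symm _ _ := hm.symm _ _
  triangle _ _ _ := hm.triangle _ _ _

theorem MBtw.symm (hd : ∀ x y, d x y = d y x) {u v w : α} (h : MBtw d u v w) : MBtw d w v u :=
  ⟨h.2.2.1.symm, h.2.1.symm, h.1.symm, by rw [hd w v, hd v u, hd w u]; linarith [h.2.2.2]⟩

theorem mem_metricEdges_iff (hd : ∀ x y, d x y = d y x) {a b c : α} :
    ({a, b, c} : Set α) ∈ metricEdges d ↔ MBtw d a b c ∨ MBtw d b a c ∨ MBtw d a c b := by
  constructor
  · rintro ⟨u, v, w, hs, h⟩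
    have hmem : ∀ t ∈ ({u, v, w} : Set α), t = a ∨ t = b ∨ t = c := fun t ht => by
      rw [← hs] at ht; simpa using ht
    rcases hmem u (by simp) with rfl | rfl | rfl <;> rcases hmem v (by simp) with rfl | rfl | rfl <;>
      rcases hmem w (by simp) with rfl | rfl | rfl <;>
      first
        | exact (h.1 rfl).elim
        | exact (h.2.1 rfl).elim
        | exact (h.2.2.1 rfl).elim
        | exact .inl h
        | exact .inr (.inl h)
        | exact .inr (.inr h)
        | exact .inl (h.symm hd)
        | exact .inr (.inl (h.symm hd))
        | exact .inr (.inr (h.symm hd))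
  · rintro (h | h | h)
    · exact ⟨a, b, c, rfl, h⟩
    · exact ⟨b, a, c, Set.insert_comm _ _ _, h⟩
    · exact ⟨a, c, b, by rw [Set.pair_comm], h⟩

theorem mem_metricEdges_comap {d : β → β → ℝ} (hd : ∀ x y, d x y = d y x) {φ : α → β}
    (hφ : Injective φ) {a b c : α} :
    ({a, b, c} : Set α) ∈ metricEdges (fun x y => d (φ x) (φ y)) ↔
      ({φ a, φ b, φ c} : Set β) ∈ metricEdges d := by
  simp only [mem_metricEdges_iff hd, mem_metricEdges_iff (fun x y => hd (φ x) (φ y)), MBtw,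
    hφ.ne_iff]

theorem left_mem_lineOf (x y : α) : x ∈ lineOf d x y := Or.inl (Or.inl rfl)

theorem right_mem_lineOf (x y : α) : y ∈ lineOf d x y := Or.inl (Or.inr rfl)

theorem mem_lineOf_iff {x y z : α} (hzx : z ≠ x) (hzy : z ≠ y) :
    z ∈ lineOf d x y ↔ ({x, y, z} : Set α) ∈ metricEdges d := by
  simp [lineOf, hzx, hzy]

end MetricEdges

section OnePointExtension

variable {α : Type*} {d : α → α → ℝ}

def extDist (d : α → α → ℝ) (g : α → ℝ) : Option α → Option α → ℝ
  | none, none => 0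
  | none, some v => g v
  | some u, none => g u
  | some u, some v => d u v

theorem isMetric_extDist (hm : IsMetric d) {g : α → ℝ} (hpos : ∀ u, 0 < g u)
    (hlip : ∀ u v, g u ≤ g v + d u v) (hsum : ∀ u v, d u v ≤ g u + g v) :
    IsMetric (extDist d g) where
  eq_iff := by
    rintro (_ | u) (_ | v)
    · simp [extDist]
    · simp [extDist, (hpos v).ne']
    · simp [extDist, (hpos u).ne']
    · simp [extDist, hm.eq_iff]
  symm := by
    rintro (_ | u) (_ | v)
    · rfl
    · rfl
    · rfl
    · exact hm.symm u v
  triangle := by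
    rintro (_ | u) (_ | v) (_ | w) <;> simp only [extDist]
    · simp
    · simp
    · linarith [hpos v]
    · linarith [hlip w v, hm.symm w v]
    · simp
    · exact hsum u w
    · linarith [hlip u v]
    · exact hm.triangle u v w

/-- `√(d(w₀, u)² + 1)` exceeds `d(w₀, u)` and is strictly `1`-Lipschitz in `u`. -/
theorem IsMetric.exists_nondegenerate_extension_distances (hm : IsMetric d) :
    ∃ g : α → ℝ, (∀ u, 0 < g u) ∧ (∀ u v, u ≠ v → g u < g v + d u v) ∧
      (∀ u v, u ≠ v → d u v < g u + g v) := by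
  rcases isEmpty_or_nonempty α with hα | ⟨⟨w₀⟩⟩
  · exact ⟨fun _ => 1, isEmptyElim, isEmptyElim, isEmptyElim⟩
  have hnonneg : ∀ x y, 0 ≤ d x y := fun x y => by
    linarith [hm.triangle x y x, (hm.eq_iff x x).2 rfl, hm.symm x y]
  have hsq : ∀ u, √(d w₀ u ^ 2 + 1) ^ 2 = d w₀ u ^ 2 + 1 := fun u => Real.sq_sqrt (by positivity)
  have hgt : ∀ u, d w₀ u < √(d w₀ u ^ 2 + 1) := fun u =>
    (Real.lt_sqrt (hnonneg _ _)).2 (by linarith)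
  refine ⟨fun u => √(d w₀ u ^ 2 + 1), fun u => by positivity, fun u v huv => ?_,
    fun u v _ => ?_⟩
  · have hδ : 0 < d u v := lt_of_le_of_ne (hnonneg u v) (fun h => huv ((hm.eq_iff u v).1 h.symm))
    have h₁ := hm.triangle w₀ v u
    have h₂ := hm.triangle w₀ u v
    have := hm.symm u v
    nlinarith [hsq u, hsq v, hgt u, hgt v, hnonneg w₀ u, hnonneg w₀ v]
  · linarith [hm.triangle u w₀ v, hm.symm u w₀, hgt u, hgt v]

theorem IsMetric.exists_extension_off_lines (hm : IsMetric d) :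
    ∃ D : Option α → Option α → ℝ, IsMetric D ∧ (fun x y => D (some x) (some y)) = d ∧
      ∀ u v, u ≠ v → none ∉ lineOf D (some u) (some v) := by
  obtain ⟨g, hpos, hlip, hsum⟩ := hm.exists_nondegenerate_extension_distances
  have hzero : ∀ u, d u u = 0 := fun u => (hm.eq_iff u u).2 rfl
  have hD : IsMetric (extDist d g) := by
    refine isMetric_extDist hm hpos (fun u v => ?_) (fun u v => ?_) <;>
      rcases eq_or_ne u v with rfl | huv
    · simp [hzero]
    · exact (hlip u v huv).le
    · linarith [hzero u, hpos u]
    · exact (hsum u v huv).le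
  refine ⟨extDist d g, hD, rfl, fun u v huv => ?_⟩
  rw [mem_lineOf_iff (by simp) (by simp), mem_metricEdges_iff hD.symm]
  rintro ((h | h | h) : MBtw _ _ _ _ ∨ _)
  · linarith [hlip u v huv, show d u v + g v = g u from h.2.2.2]
  · linarith [hlip v u huv.symm, show d v u + g u = g v from h.2.2.2]
  · linarith [hsum u v huv, show g u + g v = d u v from h.2.2.2]

end OnePointExtension

section BasedOn

variable {V W : Type*} {H : SimpleGraph V}

theorem basedOn_eq_metricEdges {D : Option V → Option V → ℝ}
    (hcol : ∀ a b c : V, a ≠ b → a ≠ c → b ≠ c →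
      ({some a, some b, some c} : Set (Option V)) ∈ metricEdges D)
    (hadj : ∀ u v : V, u ≠ v →
      (H.Adj u v ↔ ({none, some u, some v} : Set (Option V)) ∈ metricEdges D)) :
    basedOn H = metricEdges D := by
  ext s
  constructor
  · rintro (⟨a, b, c, hab, hac, hbc, rfl⟩ | ⟨u, v, huv, rfl⟩)
    · exact hcol a b c hab hac hbc
    · exact (hadj u v huv.ne).1 huv
  · intro hs
    obtain ⟨x, y, w, rfl, hb⟩ := id hs
    have hne : ∀ {a b : V}, some a ≠ some b → a ≠ b := fun h hab => h (congrArg some hab)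
    rcases x with _ | a <;> rcases y with _ | b <;> rcases w with _ | c
    · exact (hb.1 rfl).elim
    · exact (hb.1 rfl).elim
    · exact (hb.2.1 rfl).elim
    · exact .inr ⟨b, c, (hadj b c (hne hb.2.2.1)).2 hs, rfl⟩
    · exact (hb.2.2.1 rfl).elim
    · rw [Set.insert_comm] at hs ⊢
      exact .inr ⟨a, c, (hadj a c (hne hb.2.1)).2 hs, rfl⟩
    · rw [Set.pair_comm, Set.insert_comm] at hs ⊢
      exact .inr ⟨a, b, (hadj a b (hne hb.1)).2 hs, rfl⟩
    · exact .inl ⟨a, b, c, hne hb.1, hne hb.2.1, hne hb.2.2.1, rfl⟩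

/-- The realising metric is `d` restricted to `f '' V ∪ {z}`, with `z` as the extra point. -/
theorem isMetricHypergraph_basedOn_of_lineOf {d : W → W → ℝ} (hm : IsMetric d) {f : V → W}
    (hf : Injective f) {z : W} (hz : ∀ v, f v ≠ z)
    (hcol : ∀ a b c, a ≠ b → a ≠ c → b ≠ c → ({f a, f b, f c} : Set W) ∈ metricEdges d)
    (hadj : ∀ u v, u ≠ v → (H.Adj u v ↔ z ∈ lineOf d (f u) (f v))) :
    IsMetricHypergraph (basedOn H) := by
  have hφ : Injective (Option.elim' z f) := by
    rintro (_ | a) (_ | b) h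
    exacts [rfl, (hz b h.symm).elim, (hz a h).elim, congrArg some (hf h)]
  refine ⟨_, hm.comap hφ, basedOn_eq_metricEdges (fun a b c hab hac hbc => ?_) fun u v huv => ?_⟩
  · exact (mem_metricEdges_comap hm.symm hφ).2 (hcol a b c hab hac hbc)
  · rw [mem_metricEdges_comap hm.symm hφ, hadj u v huv, mem_lineOf_iff (hz u).symm (hz v).symm]
    simp only [Option.elim']
    rw [Set.insert_comm z, Set.pair_comm z]

end BasedOn

section LinesOfGraph

variable {V W : Type*} {H : SimpleGraph V}

theorem isEdgePair_pair_iff {a b : V} : IsEdgePair H {a, b} ↔ H.Adj a b := by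
  refine ⟨?_, fun h => ⟨a, b, h, rfl⟩⟩
  rintro ⟨u, v, huv, he⟩
  rcases Set.pair_eq_pair_iff.1 he with ⟨rfl, rfl⟩ | ⟨rfl, rfl⟩
  exacts [huv, huv.symm]

theorem graphEquiv_pair_iff {a b c e : V} :
    graphEquiv H {a, b} {c, e} ↔ (H.Adj a b ↔ H.Adj c e) := by
  simp only [graphEquiv, isEdgePair_pair_iff]
  tauto

def LineRespectsAdj (d : W → W → ℝ) (f : V → W) (H : SimpleGraph V) : Prop :=
  ∀ a b c e, a ≠ b → c ≠ e → (H.Adj a b ↔ H.Adj c e) →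
    lineOf d (f a) (f b) = lineOf d (f c) (f e)

variable {d : W → W → ℝ} {f : V → W}

theorem LineRespectsAdj.compl (h : LineRespectsAdj d f H) : LineRespectsAdj d f Hᶜ :=
  fun a b c e hab hce hadj => h a b c e hab hce <| by
    simp only [SimpleGraph.compl_adj, hab, hce, ne_eq, not_false_eq_true, true_and] at hadj
    exact not_iff_not.1 hadj

/-- Either some pair through `c` is in the class of `ab`, or `ca` and `cb` are in one class. -/
theorem LineRespectsAdj.collinear (h : LineRespectsAdj d f H) (hf : Injective f) {a b c : V}
    (hab : a ≠ b) (hac : a ≠ c) (hbc : b ≠ c) : ({f a, f b, f c} : Set W) ∈ metricEdges d := by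
  by_cases hw : ∃ w, c ≠ w ∧ (H.Adj c w ↔ H.Adj a b)
  · obtain ⟨w, hcw, hw⟩ := hw
    have := h c w a b hcw hab hw ▸ left_mem_lineOf (d := d) (f c) (f w)
    exact (mem_lineOf_iff (hf.ne hac.symm) (hf.ne hbc.symm)).1 this
  · push Not at hw
    have hca : H.Adj c a ↔ H.Adj c b := by
      have := hw a hac.symm
      have := hw b hbc.symm
      tauto
    have := h c a c b hac.symm hbc.symm hca ▸ right_mem_lineOf (d := d) (f c) (f b)
    rw [mem_lineOf_iff (hf.ne hbc) (hf.ne hab.symm)] at this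
    rwa [Set.insert_comm, Set.pair_comm] at this

theorem LineRespectsAdj.apply_mem_lineOf (h : LineRespectsAdj d f H) (hf : Injective f)
    {r s : V} (hrs : r ≠ s) (v : V) : f v ∈ lineOf d (f r) (f s) := by
  rcases eq_or_ne v r with rfl | hvr
  · exact left_mem_lineOf _ _
  rcases eq_or_ne v s with rfl | hvs
  · exact right_mem_lineOf _ _
  exact (mem_lineOf_iff (hf.ne hvr) (hf.ne hvs)).2 (h.collinear hf hrs hvr.symm hvs.symm)

theorem isMetricHypergraph_basedOn_of_separating_point (hm : IsMetric d) (hf : Injective f)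
    (h : LineRespectsAdj d f H) {p q r s : V} (hpq : H.Adj p q) (hrs : r ≠ s)
    (hnrs : ¬ H.Adj r s) {z : W} (hzE : z ∈ lineOf d (f p) (f q))
    (hzN : z ∉ lineOf d (f r) (f s)) : IsMetricHypergraph (basedOn H) := by
  refine isMetricHypergraph_basedOn_of_lineOf hm hf (z := z)
    (fun v hv => hzN (hv ▸ h.apply_mem_lineOf hf hrs v))
    (fun _ _ _ => h.collinear hf) fun u v huv => ?_
  by_cases huv' : H.Adj u v
  · simpa [huv', h u v p q huv hpq.ne (iff_of_true huv' hpq)] using hzE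
  · simpa [huv', h u v r s huv hrs (iff_of_false huv' hnrs)] using hzN

theorem isMetricHypergraph_basedOn_of_forall_not_adj (hm : IsMetric d) (hf : Injective f)
    (h : LineRespectsAdj d f H) (hH : ∀ u v, ¬ H.Adj u v) : IsMetricHypergraph (basedOn H) := by
  obtain ⟨D, hD, hDd, hoff⟩ := hm.exists_extension_off_lines
  refine isMetricHypergraph_basedOn_of_lineOf hD ((Option.some_injective W).comp hf) (z := none)
    (fun _ => Option.some_ne_none _) (fun a b c hab hac hbc => ?_)
    fun u v huv => iff_of_false (hH u v) (hoff _ _ (hf.ne huv))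
  rw [← hDd] at h
  exact (mem_metricEdges_comap hD.symm (Option.some_injective W)).1 (h.collinear hf hab hac hbc)

end LinesOfGraph

/-- If neither the hypergraph based on `G` nor the one based on its
complement is metric, then `≡_G` is an obstacle. -/
theorem stmt_10 {V : Type u} (G : SimpleGraph V)
    (h1 : ¬ IsMetricHypergraph (basedOn G))
    (h2 : ¬ IsMetricHypergraph (basedOn Gᶜ)) :
    IsObstacle (graphEquiv G) := by
  rintro ⟨W, f, d, hm, hiff⟩
  have hG : LineRespectsAdj d f G := fun a b c e hab hce hadj =>
    (hiff a b c e hab hce).2 (graphEquiv_pair_iff.2 hadj)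
  by_cases hE : ∃ p q, G.Adj p q
  · by_cases hN : ∃ r s, r ≠ s ∧ ¬ G.Adj r s
    · obtain ⟨p, q, hpq⟩ := hE
      obtain ⟨r, s, hrs, hnrs⟩ := hN
      have hne : lineOf d (f p) (f q) ≠ lineOf d (f r) (f s) := fun h =>
        hnrs ((graphEquiv_pair_iff.1 ((hiff p q r s hpq.ne hrs).1 h)).1 hpq)
      obtain ⟨z, hz⟩ := Set.symmDiff_nonempty.2 hne
      rcases Set.mem_symmDiff.1 hz with ⟨hzE, hzN⟩ | ⟨hzN, hzE⟩
      · exact h1 (isMetricHypergraph_basedOn_of_separating_point hm f.injective hG hpq hrs hnrs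
          hzE hzN)
      · exact h2 (isMetricHypergraph_basedOn_of_separating_point hm f.injective hG.compl
          ((G.compl_adj r s).2 ⟨hrs, hnrs⟩) hpq.ne (fun h => ((G.compl_adj p q).1 h).2 hpq)
          hzN hzE)
    · push Not at hN
      exact h2 (isMetricHypergraph_basedOn_of_forall_not_adj hm f.injective hG.compl
        fun u v h => ((G.compl_adj u v).1 h).2 (hN u v ((G.compl_adj u v).1 h).1))
  · push Not at hE
    exact h1 (isMetricHypergraph_basedOn_of_forall_not_adj hm f.injective hG hE)
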